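/- The q-binomial sums S_n = Σ_{k=0}^{⌊n/2⌋} (−1)^k q^{k(k−1)/2} [n−k choose k]_q satisfy, for every integer n ≥ 2, the second-order recurrence S_n = q^{⌊n/3⌋} S_{n−1} − q^{⌊2n/3⌋−1} S_{n−2} in the polynomial ring ℤ[q]. -/

import Mathlib

/-!
Writing `S_n` and `U_n = ∑_k (-1)^k q^{k(k+1)/2} [n-k choose k]_q` as sums over `i + k = n`, the
two q-Pascal rules give `S_{n+2} = U_{n+1} - U_n` and `U_{n+2} = U_{n+1} - q^{n+1} S_n`, hence
`S_{n+3} = -q^{n+1} S_n`. Multiplying the recurrence at `n` by `-q^{n+1}` and applying this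
to each of its three terms yields the recurrence at `n + 3`, so it suffices to check `n = 2, 3, 4`
from `S_0 = S_1 = 1`, `S_2 = 0`.
-/

/-- The Gaussian (q-)binomial coefficient `[n choose k]_q ∈ ℤ[q]`, defined through the
q-Pascal recurrence `[n+1 choose k+1] = [n choose k] + q^{k+1} [n choose k+1]`. -/
noncomputable def qBinom : ℕ → ℕ → Polynomial ℤ
  | _, 0 => 1
  | 0, _ + 1 => 0
  | n + 1, k + 1 => qBinom n k + Polynomial.X ^ (k + 1) * qBinom n (k + 1)

/-- `S_n = ∑_{k=0}^{⌊n/2⌋} (-1)^k q^{k(k-1)/2} [n-k choose k]_q ∈ ℤ[q]`. -/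
noncomputable def qBinomSum (n : ℕ) : Polynomial ℤ :=
  ∑ k ∈ Finset.range (n / 2 + 1),
    (-1) ^ k * Polynomial.X ^ (k * (k - 1) / 2) * qBinom (n - k) k

open Polynomial Finset

theorem Nat.succ_choose_two (k : ℕ) : (k + 1).choose 2 = k + k.choose 2 := by
  rw [Nat.choose_succ_succ', Nat.choose_one_right]

theorem qBinom_zero_right (n : ℕ) : qBinom n 0 = 1 := by
  cases n <;> rfl

theorem qBinom_zero_succ (k : ℕ) : qBinom 0 (k + 1) = 0 := rfl

theorem qBinom_succ_succ (n k : ℕ) :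
    qBinom (n + 1) (k + 1) = qBinom n k + X ^ (k + 1) * qBinom n (k + 1) := rfl

theorem qBinom_eq_zero_of_lt {n k : ℕ} (h : n < k) : qBinom n k = 0 := by
  induction n generalizing k with
  | zero => obtain ⟨j, rfl⟩ := Nat.exists_eq_succ_of_ne_zero h.ne'; rfl
  | succ n ih =>
    obtain ⟨j, rfl⟩ := Nat.exists_eq_succ_of_ne_zero (by omega : k ≠ 0)
    rw [qBinom_succ_succ, ih (by omega), ih (by omega), mul_zero, add_zero]

theorem qBinom_succ_succ' (n k : ℕ) :
    qBinom (n + 1) (k + 1) = X ^ (n - k) * qBinom n k + qBinom n (k + 1) := by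
  induction n generalizing k with
  | zero =>
    cases k with
    | zero => simp [qBinom_succ_succ, qBinom_zero_right, qBinom_zero_succ]
    | succ j => simp [qBinom_eq_zero_of_lt]
  | succ n ih =>
    rw [qBinom_succ_succ (n + 1) k]
    cases k with
    | zero =>
      have hn1 := qBinom_succ_succ n 0
      have ih0 := ih 0
      simp only [qBinom_zero_right, Nat.sub_zero, zero_add, pow_one, mul_one] at hn1 ih0 ⊢
      linear_combination X * ih0 - hn1
    | succ j =>
      rcases le_or_gt (j + 1) n with hjn | hnj
      · obtain ⟨d, rfl⟩ := Nat.exists_eq_add_of_le hjn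
        have ihj := ih j
        have ihj1 := ih (j + 1)
        rw [show j + 1 + d - j = d + 1 by omega] at ihj
        rw [Nat.add_sub_cancel_left] at ihj1
        rw [show j + 1 + d + 1 - (j + 1) = d + 1 by omega]
        linear_combination ihj + X ^ (j + 2) * ihj1 - X ^ (d + 1) * qBinom_succ_succ (j + 1 + d) j
          - qBinom_succ_succ (j + 1 + d) (j + 1)
      · rw [qBinom_eq_zero_of_lt (by omega : n + 1 < j + 1 + 1), show n + 1 - (j + 1) = 0 by omega]
        ring

noncomputable def weightedQBinomSum (f : ℕ → ℤ[X]) (n : ℕ) : ℤ[X] :=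
  ∑ p ∈ antidiagonal n, f p.2 * qBinom p.1 p.2

section weightedQBinomSum

variable (f : ℕ → ℤ[X]) (n : ℕ)

theorem weightedQBinomSum_succ :
    weightedQBinomSum f (n + 1) =
      f 0 + ∑ p ∈ antidiagonal n, f (p.2 + 1) * qBinom p.1 (p.2 + 1) := by
  rw [weightedQBinomSum, Nat.sum_antidiagonal_succ', qBinom_zero_right, mul_one]

theorem weightedQBinomSum_add_two_eq_sum_succ_succ :
    weightedQBinomSum f (n + 2) =
      f 0 + ∑ p ∈ antidiagonal n, f (p.2 + 1) * qBinom (p.1 + 1) (p.2 + 1) := by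
  rw [weightedQBinomSum_succ, Nat.sum_antidiagonal_succ, qBinom_zero_succ, mul_zero, zero_add]

theorem weightedQBinomSum_add_two :
    weightedQBinomSum f (n + 2) =
      weightedQBinomSum (fun k ↦ f (k + 1)) n +
        weightedQBinomSum (fun k ↦ X ^ k * f k) (n + 1) := by
  rw [weightedQBinomSum_add_two_eq_sum_succ_succ, weightedQBinomSum_succ (fun k ↦ X ^ k * f k)]
  simp only [qBinom_succ_succ, mul_add, sum_add_distrib, weightedQBinomSum, pow_zero, one_mul,
    mul_assoc, mul_left_comm (f _) (X ^ _)]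
  ring

theorem weightedQBinomSum_add_two' :
    weightedQBinomSum f (n + 2) = weightedQBinomSum f (n + 1) +
      ∑ p ∈ antidiagonal n, f (p.2 + 1) * X ^ (p.1 - p.2) * qBinom p.1 p.2 := by
  rw [weightedQBinomSum_add_two_eq_sum_succ_succ, weightedQBinomSum_succ]
  simp only [qBinom_succ_succ', mul_add, sum_add_distrib, mul_assoc]
  ring

end weightedQBinomSum

theorem qBinomSum_eq_weightedQBinomSum (n : ℕ) :
    qBinomSum n = weightedQBinomSum (fun k ↦ (-1) ^ k * X ^ k.choose 2) n := by
  rw [qBinomSum, weightedQBinomSum, ← Nat.sum_antidiagonal_swap,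
    Nat.sum_antidiagonal_eq_sum_range_succ_mk]
  refine (sum_subset (range_subset_range.mpr (by omega : n / 2 + 1 ≤ n + 1))
    fun k hk hk' ↦ ?_).trans ?_
  · simp only [mem_range] at hk hk'
    simp [qBinom_eq_zero_of_lt (by omega : n - k < k)]
  · simp [Nat.choose_two_right]

theorem weightedQBinomSum_neg (f : ℕ → ℤ[X]) (n : ℕ) :
    weightedQBinomSum (fun k ↦ -f k) n = -weightedQBinomSum f n := by
  simp only [weightedQBinomSum, neg_mul, sum_neg_distrib]

noncomputable def qBinomSumShifted (n : ℕ) : ℤ[X] :=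
  weightedQBinomSum (fun k ↦ (-1) ^ k * X ^ (k + 1).choose 2) n

theorem qBinomSum_add_two_eq_qBinomSumShifted_sub (n : ℕ) :
    qBinomSum (n + 2) = qBinomSumShifted (n + 1) - qBinomSumShifted n := by
  have hsucc : (fun k ↦ (-1 : ℤ[X]) ^ (k + 1) * X ^ (k + 1).choose 2) =
      fun k ↦ -((-1) ^ k * X ^ (k + 1).choose 2) := by
    funext k; ring
  have hshift : (fun k ↦ X ^ k * ((-1 : ℤ[X]) ^ k * X ^ k.choose 2)) =
      fun k ↦ (-1) ^ k * X ^ (k + 1).choose 2 := by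
    funext k; rw [Nat.succ_choose_two, pow_add]; ring
  rw [qBinomSum_eq_weightedQBinomSum, weightedQBinomSum_add_two, hsucc, hshift,
    weightedQBinomSum_neg, qBinomSumShifted, qBinomSumShifted]
  ring

theorem qBinomSumShifted_add_two (n : ℕ) :
    qBinomSumShifted (n + 2) = qBinomSumShifted (n + 1) - X ^ (n + 1) * qBinomSum n := by
  rw [qBinomSum_eq_weightedQBinomSum]
  unfold qBinomSumShifted
  rw [weightedQBinomSum_add_two', sub_eq_add_neg]
  congr 1
  rw [weightedQBinomSum, mul_sum, ← sum_neg_distrib]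
  refine sum_congr rfl fun ⟨i, k⟩ hik ↦ ?_
  rw [HasAntidiagonal.mem_antidiagonal] at hik
  rcases lt_or_ge i k with hlt | hle
  · simp [qBinom_eq_zero_of_lt hlt]
  · have hexp : (k + 1 + 1).choose 2 + (i - k) = n + 1 + k.choose 2 := by
      rw [Nat.succ_choose_two, Nat.succ_choose_two]
      omega
    dsimp only
    rw [mul_assoc ((-1) ^ (k + 1)), ← pow_add, hexp, pow_add]
    ring

theorem qBinomSum_add_three (n : ℕ) : qBinomSum (n + 3) = -X ^ (n + 1) * qBinomSum n := by
  rw [qBinomSum_add_two_eq_qBinomSumShifted_sub, qBinomSumShifted_add_two]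
  ring

theorem qBinomSum_zero : qBinomSum 0 = 1 := by
  simp [qBinomSum, qBinom_zero_right]

theorem qBinomSum_one : qBinomSum 1 = 1 := by
  simp [qBinomSum, qBinom_zero_right]

theorem qBinomSum_two : qBinomSum 2 = 0 := by
  simp [qBinomSum, sum_range_succ, qBinom_zero_right, qBinom_succ_succ, qBinom_zero_succ]

theorem qBinomSum_add_two : ∀ n : ℕ,
    qBinomSum (n + 2) = X ^ ((n + 2) / 3) * qBinomSum (n + 1)
      - X ^ (2 * (n + 2) / 3 - 1) * qBinomSum n
  | 0 => by simp [qBinomSum_zero, qBinomSum_one, qBinomSum_two]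
  | 1 => by simp [qBinomSum_add_three 0, qBinomSum_zero, qBinomSum_one, qBinomSum_two]
  | 2 => by
    simp [qBinomSum_add_three 1, qBinomSum_add_three 0, qBinomSum_zero, qBinomSum_one,
      qBinomSum_two, pow_two]
  | n + 3 => by
    rw [qBinomSum_add_three (n + 2), qBinomSum_add_two n, qBinomSum_add_three (n + 1),
      qBinomSum_add_three n, show (n + 3 + 2) / 3 = (n + 2) / 3 + 1 by omega,
      show 2 * (n + 3 + 2) / 3 - 1 = 2 * (n + 2) / 3 - 1 + 2 by omega]
    ring

/-- For every `n ≥ 2`, `S_n = q^{⌊n/3⌋} S_{n-1} - q^{⌊2n/3⌋-1} S_{n-2}` in `ℤ[q]`. -/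
theorem qBinomSum_second_order_recurrence (n : ℕ) (hn : 2 ≤ n) :
    qBinomSum n =
      Polynomial.X ^ (n / 3) * qBinomSum (n - 1)
        - Polynomial.X ^ (2 * n / 3 - 1) * qBinomSum (n - 2) := by
  obtain ⟨m, rfl⟩ := Nat.exists_eq_add_of_le' hn
  exact qBinomSum_add_two m
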